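/- arXiv:2505.19172 — 4 statements merged into one kernel-verified Lean document; each statement's English description precedes it below -/
import Mathlib

section
/- Let a = n(n-1)/(n+1) and b = (n-1)/(n+1) for n ≥ 4. Then the function f(r) = r^a (1-r)^b + r^b (1-r)^a satisfies f''(1/2) > 0; in particular r = 1/2 is not a local maximum of f. -/
/-!
At `r = 1/2` all the monomials `r ^ p * (1 - r) ^ q` with the same `p + q` take the same value, so
differentiating `r ^ p * (1 - r) ^ q` twice gives `((p - q) ^ 2 - (p + q)) * (1/2) ^ (p + q - 2)`
there, an expression symmetric in `p` and `q`. Here `a + b = n - 1` and `a - b = (n - 1)² / (n + 1)`,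
so `f''(1/2) > 0` amounts to `(n - 1)³ > (n + 1)²`, which holds for `n ≥ 4`.
A positive second derivative excludes a local maximum: by the second derivative test the point
would also be a local minimum, so `f` would be locally constant and `f''` would vanish.
-/

open Filter Topology

theorem not_isLocalMax_of_deriv_deriv_pos {f : ℝ → ℝ} {x₀ : ℝ} (hf : 0 < deriv (deriv f) x₀)
    (hc : ContinuousAt f x₀) : ¬ IsLocalMax f x₀ := by
  intro hmax
  have hmin : IsLocalMin f x₀ := isLocalMin_of_deriv_deriv_pos hf hmax.deriv_eq_zero hc
  have hconst : f =ᶠ[𝓝 x₀] fun _ => f x₀ :=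
    (hmax.and hmin).mono fun _ hx => le_antisymm hx.1 hx.2
  have : deriv (deriv f) x₀ = 0 := by
    rw [hconst.deriv.deriv_eq]
    simp
  exact hf.ne' this

noncomputable def betaMonomial (p q r : ℝ) : ℝ := r ^ p * (1 - r) ^ q

section betaMonomial

variable (p q : ℝ) {r : ℝ}

theorem hasDerivAt_betaMonomial (h0 : r ≠ 0) (h1 : r ≠ 1) :
    HasDerivAt (betaMonomial p q)
      (p * betaMonomial (p - 1) q r - q * betaMonomial p (q - 1) r) r := by
  have hsub : HasDerivAt (fun r : ℝ => 1 - r) (-1) r := by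
    simpa using (hasDerivAt_id r).const_sub 1
  refine ((Real.hasDerivAt_rpow_const (p := p) (Or.inl h0)).mul
    (hsub.rpow_const (p := q) (Or.inl (sub_ne_zero.2 h1.symm)))).congr_deriv ?_
  simp only [betaMonomial]
  ring

theorem deriv_betaMonomial_eventuallyEq (h0 : r ≠ 0) (h1 : r ≠ 1) :
    deriv (betaMonomial p q) =ᶠ[𝓝 r]
      fun x => p * betaMonomial (p - 1) q x - q * betaMonomial p (q - 1) x := by
  filter_upwards [isOpen_ne.mem_nhds h0, isOpen_ne.mem_nhds h1] with x hx0 hx1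
  exact (hasDerivAt_betaMonomial p q hx0 hx1).deriv

theorem hasDerivAt_deriv_betaMonomial (h0 : r ≠ 0) (h1 : r ≠ 1) :
    HasDerivAt (deriv (betaMonomial p q))
      (p * (p - 1) * betaMonomial (p - 2) q r - 2 * p * q * betaMonomial (p - 1) (q - 1) r
        + q * (q - 1) * betaMonomial p (q - 2) r) r := by
  have := ((hasDerivAt_betaMonomial (p - 1) q h0 h1).const_mul p).sub
    ((hasDerivAt_betaMonomial p (q - 1) h0 h1).const_mul q)
  refine (this.congr_of_eventuallyEq (deriv_betaMonomial_eventuallyEq p q h0 h1)).congr_deriv ?_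
  ring_nf

theorem betaMonomial_half : betaMonomial p q (1 / 2) = (1 / 2) ^ (p + q) := by
  norm_num [betaMonomial, ← Real.rpow_add]

theorem hasDerivAt_deriv_betaMonomial_half :
    HasDerivAt (deriv (betaMonomial p q)) (((p - q) ^ 2 - (p + q)) * (1 / 2) ^ (p + q - 2))
      (1 / 2) := by
  convert hasDerivAt_deriv_betaMonomial p q (r := 1 / 2) (by norm_num) (by norm_num) using 1
  simp only [betaMonomial_half]
  ring_nf

end betaMonomial

theorem deriv_deriv_betaMonomial_add_swap_half (p q : ℝ) :
    deriv (deriv (betaMonomial p q + betaMonomial q p)) (1 / 2)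
      = 2 * ((p - q) ^ 2 - (p + q)) * (1 / 2) ^ (p + q - 2) := by
  have hsum : deriv (betaMonomial p q + betaMonomial q p) =ᶠ[𝓝 (1 / 2)]
      deriv (betaMonomial p q) + deriv (betaMonomial q p) := by
    filter_upwards [isOpen_ne.mem_nhds (by norm_num : (1 / 2 : ℝ) ≠ 0),
      isOpen_ne.mem_nhds (by norm_num : (1 / 2 : ℝ) ≠ 1)] with x h0 h1
    exact deriv_add (hasDerivAt_betaMonomial p q h0 h1).differentiableAt
      (hasDerivAt_betaMonomial q p h0 h1).differentiableAt
  rw [hsum.deriv_eq, ((hasDerivAt_deriv_betaMonomial_half p q).add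
    (hasDerivAt_deriv_betaMonomial_half q p)).deriv, add_comm q p]
  ring

theorem add_lt_sub_sq_of_four_le {n a b : ℝ} (hn : 4 ≤ n) (ha : a = n * (n - 1) / (n + 1))
    (hb : b = (n - 1) / (n + 1)) : a + b < (a - b) ^ 2 := by
  have hsum : a + b = n - 1 := by
    rw [ha, hb]
    field_simp
  have hdiff : a - b = (n - 1) ^ 2 / (n + 1) := by
    rw [ha, hb]
    field_simp
  rw [hsum, hdiff, div_pow, lt_div_iff₀ (by positivity)]
  nlinarith [sq_nonneg (n - 4), sq_nonneg (n - 1)]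

theorem stmt_2 (n : ℕ) (hn : 4 ≤ n) (a b : ℝ)
    (ha : a = (n:ℝ) * ((n:ℝ) - 1) / ((n:ℝ) + 1)) (hb : b = ((n:ℝ) - 1) / ((n:ℝ) + 1))
    (f : ℝ → ℝ)
    (hf : ∀ r : ℝ, f r = r ^ a * (1 - r) ^ b + r ^ b * (1 - r) ^ a) :
    0 < deriv (deriv f) (1/2) ∧ ¬ IsLocalMax f (1/2) := by
  have hf_eq : f = betaMonomial a b + betaMonomial b a := funext hf
  have hgap : a + b < (a - b) ^ 2 := add_lt_sub_sq_of_four_le (by exact_mod_cast hn) ha hb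
  have hpos : 0 < deriv (deriv f) (1/2) := by
    rw [hf_eq, deriv_deriv_betaMonomial_add_swap_half]
    exact mul_pos (mul_pos two_pos (sub_pos.2 hgap)) (Real.rpow_pos_of_pos (by norm_num) _)
  have hcont : ContinuousAt f (1/2) := by
    have h0 : (1 / 2 : ℝ) ≠ 0 := by norm_num
    have h1 : (1 / 2 : ℝ) ≠ 1 := by norm_num
    rw [hf_eq]
    exact (hasDerivAt_betaMonomial a b h0 h1).continuousAt.add
      (hasDerivAt_betaMonomial b a h0 h1).continuousAt
  exact ⟨hpos, not_isLocalMax_of_deriv_deriv_pos hpos hcont⟩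
end

section
/- Hölder-type inequality for the c-affine surface area integrands: let μ be a finite measure on a space X, n ≥ 2, and r : X → (0,1) measurable. Define A = ∫ (1-r)^(1/(n+1)) r^(n/(n+1)) dμ, B = ∫ r^(1/(n+1)) (1-r)^(n/(n+1)) dμ, S = ∫ r dμ. Then A ≤ S^((n-1)/n) · B^(1/n). -/
open MeasureTheory

theorem stmt_5 {X : Type*} [MeasurableSpace X] (μ : Measure X) [IsFiniteMeasure μ]
    (n : ℕ) (hn : 2 ≤ n) (r : X → ℝ) (hr : Measurable r)
    (hr01 : ∀ x, r x ∈ Set.Ioo (0:ℝ) 1)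
    (hA : Integrable (fun x => (1 - r x) ^ ((1:ℝ)/((n:ℝ)+1)) * (r x) ^ ((n:ℝ)/((n:ℝ)+1))) μ)
    (hB : Integrable (fun x => (r x) ^ ((1:ℝ)/((n:ℝ)+1)) * (1 - r x) ^ ((n:ℝ)/((n:ℝ)+1))) μ)
    (hS : Integrable r μ) :
    (∫ x, (1 - r x) ^ ((1:ℝ)/((n:ℝ)+1)) * (r x) ^ ((n:ℝ)/((n:ℝ)+1)) ∂μ)
      ≤ (∫ x, r x ∂μ) ^ (((n:ℝ) - 1)/(n:ℝ)) *
        (∫ x, (r x) ^ ((1:ℝ)/((n:ℝ)+1)) * (1 - r x) ^ ((n:ℝ)/((n:ℝ)+1)) ∂μ) ^ ((1:ℝ)/(n:ℝ)) := by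
  set N : ℝ := (n : ℝ) with hNdef
  have hN : (2:ℝ) ≤ N := by rw [hNdef]; exact_mod_cast hn
  have hN0 : (0:ℝ) < N := by linarith
  have hN1 : (0:ℝ) < N - 1 := by linarith
  have hN1' : (0:ℝ) < N + 1 := by linarith
  have hNa : N ≠ 0 := hN0.ne'
  set p : ℝ := N / (N - 1) with hpdef
  set q : ℝ := N with hqdef
  have hp0 : 0 < p := div_pos hN0 hN1
  have hq0 : 0 < q := hN0
  have hpq : p.HolderConjugate q := by
    rw [Real.holderConjugate_iff]; constructor
    · rw [hpdef, lt_div_iff₀ hN1]; linarith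
    · rw [hpdef, hqdef, inv_div, sub_div, div_self hNa]; ring
  set f : X → ℝ := fun x => r x ^ ((N - 1) / N) with hfdef
  set g : X → ℝ := fun x => r x ^ (1 / (N * (N + 1))) * (1 - r x) ^ (1 / (N + 1)) with hgdef
  have hx : ∀ x, 0 < r x ∧ 0 < 1 - r x := fun x => ⟨(hr01 x).1, by linarith [(hr01 x).2]⟩
  have hfg : ∀ x, f x * g x = (1 - r x) ^ ((1:ℝ)/(N+1)) * (r x) ^ (N/(N+1)) := by
    intro x
    obtain ⟨h0, h1⟩ := hx x
    simp only [hfdef, hgdef]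
    rw [← mul_assoc, ← Real.rpow_add h0]
    have he : (N - 1) / N + 1 / (N * (N + 1)) = N / (N + 1) := by
      rw [div_add_div _ _ hNa (mul_ne_zero hNa hN1'.ne'), div_eq_div_iff (mul_ne_zero hNa (mul_ne_zero hNa hN1'.ne')) hN1'.ne']; ring
    rw [he, mul_comm]
  have hfp : ∀ x, f x ^ p = r x := by
    intro x
    obtain ⟨h0, _⟩ := hx x
    simp only [hfdef]
    rw [← Real.rpow_mul h0.le]
    have he : (N - 1) / N * p = 1 := by
      rw [hpdef, hqdef, div_mul_div_comm, mul_comm (N - 1) N]; exact div_self (mul_ne_zero hNa hN1.ne')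
    rw [he, Real.rpow_one]
  have hgq : ∀ x, g x ^ q = (r x) ^ ((1:ℝ)/(N+1)) * (1 - r x) ^ (N/(N+1)) := by
    intro x
    obtain ⟨h0, h1⟩ := hx x
    simp only [hgdef]
    rw [Real.mul_rpow (Real.rpow_nonneg h0.le _) (Real.rpow_nonneg h1.le _),
      ← Real.rpow_mul h0.le, ← Real.rpow_mul h1.le]
    have he1 : 1 / (N * (N + 1)) * q = 1 / (N + 1) := by
      rw [hqdef, div_mul_eq_mul_div, one_mul, div_mul_cancel_left₀ hNa, one_div]
    have he2 : 1 / (N + 1) * q = N / (N + 1) := by rw [hqdef]; field_simp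
    rw [he1, he2]
  have hfmeas : AEStronglyMeasurable f μ :=
    (hr.pow measurable_const).aestronglyMeasurable
  have hgmeas : AEStronglyMeasurable g μ :=
    ((hr.pow measurable_const).mul ((measurable_const.sub hr).pow measurable_const)).aestronglyMeasurable
  have hf_nonneg : 0 ≤ᵐ[μ] f :=
    Filter.Eventually.of_forall fun x => Real.rpow_nonneg (hx x).1.le _
  have hg_nonneg : 0 ≤ᵐ[μ] g :=
    Filter.Eventually.of_forall fun x =>
      mul_nonneg (Real.rpow_nonneg (hx x).1.le _) (Real.rpow_nonneg (hx x).2.le _)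
  -- Memℒp facts
  have hfmem : MemLp f (ENNReal.ofReal p) μ := by
    rw [← memLp_norm_rpow_iff (q := ENNReal.ofReal p) hfmeas
      (by simp [ENNReal.ofReal_eq_zero]; linarith) ENNReal.ofReal_ne_top,
      ENNReal.div_self (by simp [ENNReal.ofReal_eq_zero]; linarith) ENNReal.ofReal_ne_top,
      memLp_one_iff_integrable]
    have : (fun x => ‖f x‖ ^ (ENNReal.ofReal p).toReal) = r := by
      funext x
      rw [Real.norm_of_nonneg (Real.rpow_nonneg (hx x).1.le _),
        ENNReal.toReal_ofReal hp0.le, hfp x]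
    rw [this]
    exact hS
  have hgmem : MemLp g (ENNReal.ofReal q) μ := by
    rw [← memLp_norm_rpow_iff (q := ENNReal.ofReal q) hgmeas
      (by simp [ENNReal.ofReal_eq_zero]; linarith) ENNReal.ofReal_ne_top,
      ENNReal.div_self (by simp [ENNReal.ofReal_eq_zero]; linarith) ENNReal.ofReal_ne_top,
      memLp_one_iff_integrable]
    have : (fun x => ‖g x‖ ^ (ENNReal.ofReal q).toReal)
        = fun x => (r x) ^ ((1:ℝ)/(N+1)) * (1 - r x) ^ (N/(N+1)) := by
      funext x
      rw [Real.norm_of_nonneg (mul_nonneg (Real.rpow_nonneg (hx x).1.le _)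
        (Real.rpow_nonneg (hx x).2.le _)), ENNReal.toReal_ofReal hq0.le, hgq x]
    rw [this]
    exact hB
  have key := integral_mul_le_Lp_mul_Lq_of_nonneg hpq hf_nonneg hg_nonneg hfmem hgmem
  have e1 : (∫ x, f x * g x ∂μ) = ∫ x, (1 - r x) ^ ((1:ℝ)/(N+1)) * (r x) ^ (N/(N+1)) ∂μ :=
    integral_congr_ae (Filter.Eventually.of_forall fun x => hfg x)
  have e2 : (∫ x, f x ^ p ∂μ) = ∫ x, r x ∂μ :=
    integral_congr_ae (Filter.Eventually.of_forall fun x => hfp x)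
  have e3 : (∫ x, g x ^ q ∂μ) = ∫ x, (r x) ^ ((1:ℝ)/(N+1)) * (1 - r x) ^ (N/(N+1)) ∂μ :=
    integral_congr_ae (Filter.Eventually.of_forall fun x => hgq x)
  rw [e1, e2, e3] at key
  have hip : 1 / p = (N - 1) / N := by rw [hpdef, hqdef, one_div_div]
  have hiq : 1 / q = 1 / N := by rw [hqdef]
  rw [hip, hiq] at key
  exact key
end

section
/- Equality case of the Hölder-type inequality: with the notation of the previous statement, if A = S^((n-1)/n) · B^(1/n) and A > 0, then r is μ-almost everywhere constant. -/
/-!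
Put `g = ((1 - r) / r) ^ (n / (n + 1))` and weigh `μ` by `r`. Then `S`, `B` and `A` are the
total mass of `ν = r • μ` and the `ν`-integrals of `g` and `g ^ (1 / n)`, so the hypothesis says
that Jensen's inequality `⨍ g ^ (1 / n) ∂ν ≤ (⨍ g ∂ν) ^ (1 / n)` for the strictly concave
`t ↦ t ^ (1 / n)` is an equality. Hence `g` is constant `ν`-a.e., i.e. `μ`-a.e., and so is
`r = (1 + g ^ (1 + 1 / n))⁻¹`.
-/

open MeasureTheory

lemma Real.inv_mul_rpow_one_sub_mul_rpow {S B s : ℝ} (hS : 0 ≤ S) (hB : 0 ≤ B)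
    (hs0 : s ≠ 0) :
    S⁻¹ * (S ^ (1 - s) * B ^ s) = (S⁻¹ * B) ^ s := by
  rcases hS.eq_or_lt with rfl | hS
  · simp [Real.zero_rpow hs0]
  rw [Real.mul_rpow (inv_nonneg.2 hS.le) hB, Real.inv_rpow hS.le, Real.rpow_sub hS, Real.rpow_one]
  field_simp

lemma Real.mul_div_rpow_eq_rpow_one_sub_mul_rpow {a b : ℝ} (ha : 0 < a) (hb : 0 ≤ b) (p : ℝ) :
    a * (b / a) ^ p = a ^ (1 - p) * b ^ p := by
  rw [Real.div_rpow hb ha.le, Real.rpow_sub ha, Real.rpow_one]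
  field_simp

section WeightedByDensity

variable {X : Type*} [MeasurableSpace X] {μ : Measure X} {w : X → ℝ}

lemma integral_withDensity_ofReal (hw : AEMeasurable w μ) (hw0 : 0 ≤ᵐ[μ] w) (g : X → ℝ) :
    ∫ x, g x ∂μ.withDensity (fun x => ENNReal.ofReal (w x)) = ∫ x, w x * g x ∂μ := by
  rw [integral_withDensity_eq_integral_toReal_smul₀ hw.ennreal_ofReal
    (ae_of_all _ fun _ => ENNReal.ofReal_lt_top)]
  refine integral_congr_ae ?_
  filter_upwards [hw0] with x hx
  rw [ENNReal.toReal_ofReal hx, smul_eq_mul]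

lemma integrable_withDensity_ofReal_iff (hw : AEMeasurable w μ) (hw0 : 0 ≤ᵐ[μ] w)
    {g : X → ℝ} :
    Integrable g (μ.withDensity fun x => ENNReal.ofReal (w x)) ↔
      Integrable (fun x => w x * g x) μ := by
  rw [integrable_withDensity_iff_integrable_smul₀' hw.ennreal_ofReal
    (ae_of_all _ fun _ => ENNReal.ofReal_lt_top)]
  refine integrable_congr ?_
  filter_upwards [hw0] with x hx
  rw [ENNReal.toReal_ofReal hx, smul_eq_mul]

lemma average_withDensity_ofReal (hw : Integrable w μ) (hw0 : 0 ≤ᵐ[μ] w) (g : X → ℝ) :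
    ⨍ x, g x ∂μ.withDensity (fun x => ENNReal.ofReal (w x)) =
      (∫ x, w x ∂μ)⁻¹ * ∫ x, w x * g x ∂μ := by
  rw [average_eq, integral_withDensity_ofReal hw.aemeasurable hw0, smul_eq_mul, measureReal_def,
    withDensity_apply _ MeasurableSet.univ, setLIntegral_univ,
    ← ofReal_integral_eq_lintegral_ofReal hw hw0,
    ENNReal.toReal_ofReal (integral_nonneg_of_ae hw0)]

lemma ae_withDensity_ofReal_iff (hw : AEMeasurable w μ) (hw0 : ∀ᵐ x ∂μ, 0 < w x)
    {P : X → Prop} :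
    (∀ᵐ x ∂μ.withDensity (fun x => ENNReal.ofReal (w x)), P x) ↔ ∀ᵐ x ∂μ, P x := by
  rw [ae_withDensity_iff' hw.ennreal_ofReal]
  refine ⟨fun h => ?_, fun h => h.mono fun x hx _ => hx⟩
  filter_upwards [h, hw0] with x hx hx0 using hx (ENNReal.ofReal_pos.2 hx0).ne'

theorem ae_eq_const_of_integral_mul_rpow_eq {g : X → ℝ} {s : ℝ} (hs0 : 0 < s) (hs1 : s < 1)
    (hw0 : ∀ᵐ x ∂μ, 0 < w x) (hg0 : ∀ᵐ x ∂μ, 0 ≤ g x) (hw : Integrable w μ)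
    (hwg : Integrable (fun x => w x * g x) μ) (hwgs : Integrable (fun x => w x * g x ^ s) μ)
    (heq : ∫ x, w x * g x ^ s ∂μ = (∫ x, w x ∂μ) ^ (1 - s) * (∫ x, w x * g x ∂μ) ^ s) :
    ∃ c, ∀ᵐ x ∂μ, g x = c := by
  set ν := μ.withDensity fun x => ENNReal.ofReal (w x)
  have : IsFiniteMeasure ν := isFiniteMeasure_withDensity_ofReal hw.hasFiniteIntegral
  have hw0' : 0 ≤ᵐ[μ] w := hw0.mono fun _ hx => hx.le
  have hae {P : X → Prop} : (∀ᵐ x ∂ν, P x) ↔ ∀ᵐ x ∂μ, P x :=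
    ae_withDensity_ofReal_iff hw.aemeasurable hw0
  have hint {f : X → ℝ} (hf : Integrable (fun x => w x * f x) μ) : Integrable f ν :=
    (integrable_withDensity_ofReal_iff hw.aemeasurable hw0').2 hf
  have hwg0 : 0 ≤ ∫ x, w x * g x ∂μ :=
    integral_nonneg_of_ae <| by filter_upwards [hw0', hg0] with x hx hgx using mul_nonneg hx hgx
  have hjensen_eq : ⨍ x, g x ^ s ∂ν = (⨍ x, g x ∂ν) ^ s := by
    rw [average_withDensity_ofReal hw hw0', average_withDensity_ofReal hw hw0', heq,
      Real.inv_mul_rpow_one_sub_mul_rpow (integral_nonneg_of_ae hw0') hwg0 hs0.ne']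
  obtain hconst | hlt := (Real.strictConcaveOn_rpow hs0 hs1).ae_eq_const_or_lt_map_average
    (Real.continuous_rpow_const hs0.le).continuousOn isClosed_Ici (hae.2 hg0) (hint hwg)
    (hint hwgs)
  · exact ⟨_, hae.1 hconst⟩
  · exact absurd hjensen_eq hlt.ne

end WeightedByDensity

theorem stmt_6_general {X : Type*} [MeasurableSpace X] (μ : Measure X)
    (n : ℕ) (hn : 2 ≤ n) (r : X → ℝ)
    (hr01 : ∀ x, r x ∈ Set.Ioo (0:ℝ) 1)
    (hA : Integrable (fun x => (1 - r x) ^ ((1:ℝ)/((n:ℝ)+1)) * (r x) ^ ((n:ℝ)/((n:ℝ)+1))) μ)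
    (hB : Integrable (fun x => (r x) ^ ((1:ℝ)/((n:ℝ)+1)) * (1 - r x) ^ ((n:ℝ)/((n:ℝ)+1))) μ)
    (hS : Integrable r μ)
    (heq : (∫ x, (1 - r x) ^ ((1:ℝ)/((n:ℝ)+1)) * (r x) ^ ((n:ℝ)/((n:ℝ)+1)) ∂μ)
      = (∫ x, r x ∂μ) ^ (((n:ℝ) - 1)/(n:ℝ)) *
        (∫ x, (r x) ^ ((1:ℝ)/((n:ℝ)+1)) * (1 - r x) ^ ((n:ℝ)/((n:ℝ)+1)) ∂μ) ^ ((1:ℝ)/(n:ℝ))) :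
    ∃ c : ℝ, ∀ᵐ x ∂μ, r x = c := by
  have hn' : (2:ℝ) ≤ n := by exact_mod_cast hn
  have hr0 x : 0 < r x := (hr01 x).1
  have hr1 x : 0 ≤ 1 - r x := sub_nonneg.2 (hr01 x).2.le
  have hodds x : 0 ≤ (1 - r x) / r x := div_nonneg (hr1 x) (hr0 x).le
  set p : ℝ := n / (n + 1)
  set q : ℝ := 1 / (n + 1)
  have hpq : 1 - p = q := by simp only [p, q]; field_simp; ring
  have hqp : 1 - q = p := by rw [← hpq, sub_sub_cancel]
  have hpn : p * (1 / n) = q := by simp only [p, q]; field_simp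
  let g : X → ℝ := fun x => ((1 - r x) / r x) ^ p
  have hrg x : r x * g x = r x ^ q * (1 - r x) ^ p := by
    rw [Real.mul_div_rpow_eq_rpow_one_sub_mul_rpow (hr0 x) (hr1 x), hpq]
  have hrgn x : r x * g x ^ (1 / n : ℝ) = (1 - r x) ^ q * r x ^ p := by
    rw [← Real.rpow_mul (hodds x), hpn,
      Real.mul_div_rpow_eq_rpow_one_sub_mul_rpow (hr0 x) (hr1 x), hqp, mul_comm]
  obtain ⟨c, hc⟩ := ae_eq_const_of_integral_mul_rpow_eq (g := g) (s := 1 / n)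
    (by positivity) (by rw [div_lt_one (by positivity)]; linarith)
    (ae_of_all _ hr0) (ae_of_all _ fun x => Real.rpow_nonneg (hodds x) _) hS
    (by simpa only [hrg] using hB) (by simpa only [hrgn] using hA)
    (by simpa only [hrg, hrgn, one_sub_div (by positivity : (n:ℝ) ≠ 0)] using heq)
  refine ⟨(1 + c ^ p⁻¹)⁻¹, ?_⟩
  filter_upwards [hc] with x hx
  rw [← hx, Real.rpow_rpow_inv (hodds x) (by positivity)]
  field_simp [(hr0 x).ne']
  ring

theorem stmt_6 {X : Type*} [MeasurableSpace X] (μ : Measure X) [IsFiniteMeasure μ]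
    (n : ℕ) (hn : 2 ≤ n) (r : X → ℝ) (hr : Measurable r)
    (hr01 : ∀ x, r x ∈ Set.Ioo (0:ℝ) 1)
    (hA : Integrable (fun x => (1 - r x) ^ ((1:ℝ)/((n:ℝ)+1)) * (r x) ^ ((n:ℝ)/((n:ℝ)+1))) μ)
    (hB : Integrable (fun x => (r x) ^ ((1:ℝ)/((n:ℝ)+1)) * (1 - r x) ^ ((n:ℝ)/((n:ℝ)+1))) μ)
    (hS : Integrable r μ)
    (hpos : 0 < ∫ x, (1 - r x) ^ ((1:ℝ)/((n:ℝ)+1)) * (r x) ^ ((n:ℝ)/((n:ℝ)+1)) ∂μ)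
    (heq : (∫ x, (1 - r x) ^ ((1:ℝ)/((n:ℝ)+1)) * (r x) ^ ((n:ℝ)/((n:ℝ)+1)) ∂μ)
      = (∫ x, r x ∂μ) ^ (((n:ℝ) - 1)/(n:ℝ)) *
        (∫ x, (r x) ^ ((1:ℝ)/((n:ℝ)+1)) * (1 - r x) ^ ((n:ℝ)/((n:ℝ)+1)) ∂μ) ^ ((1:ℝ)/(n:ℝ))) :
    ∃ c : ℝ, ∀ᵐ x ∂μ, r x = c :=
  stmt_6_general μ n hn r hr01 hA hB hS heq
end

section
/- If K is a convex body in ℝ^n contained in the closed unit ball centered at each of its own points (i.e., K ∈ S_n defined as K = ⋂_{x∈K} (x + B)), then the c-dual K^c = ⋂_{x∈K} (x + B) satisfies h_K(u) + h_{K^c}(-u) = |u| for every u ∈ ℝ^n. -/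
/-!
Since `K` is its own c-dual, the identity says that `K` has constant width `1`: the support
function of `K - K` is the norm. The diameter bound gives `K - K ⊆ B`. Conversely, let `z`
minimize `⟪·, v⟫` on `K` for a unit vector `v`; then `z + v ∈ K`. Otherwise some `w ∈ K` is
farther than `1` from `z + v`, and moving `z` a little in the direction `(w - z) - c • v` (for a
suitable `c ≥ 0`) brings it strictly closer to the points of `K` at distance `1` from `z`, while
the other points of `K` have slack by compactness. The moved point is then within distance `1` of
every point of `K`, hence lies in `K`, but has a smaller value of `⟪·, v⟫`.
-/

open RealInnerProductSpace Metric Set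
open scoped Pointwise

lemma Metric.mem_iInter_closedBall_iff {α : Type*} [PseudoMetricSpace α] {s : Set α} {q : α}
    {r : ℝ} : q ∈ ⋂ x ∈ s, closedBall x r ↔ s ⊆ closedBall q r := by
  simp only [mem_iInter₂, mem_closedBall, subset_def, dist_comm]

lemma sub_self_subset_closedBall_zero_one {G : Type*} [SeminormedAddCommGroup G] {K : Set G}
    (hKc : K = ⋂ x ∈ K, closedBall x 1) : K - K ⊆ closedBall 0 1 := by
  rintro _ ⟨x, hx, y, hy, rfl⟩
  rw [mem_closedBall_zero_iff, ← dist_eq_norm]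
  exact mem_closedBall'.1 (mem_iInter_closedBall_iff.1 (hKc ▸ hx) hy)

variable {E : Type*} [NormedAddCommGroup E] [InnerProductSpace ℝ E]

lemma exists_inner_neg_and_le_inner_of_norm_eq_one {e v : E} (hv : ‖v‖ = 1)
    (hev : 1 < ‖e - v‖) :
    ∃ Δ : E, ⟪Δ, v⟫ < 0 ∧ ∃ β > 0, ∀ p : E, ‖p‖ = 1 → ‖e - p‖ ≤ 1 → β ≤ ⟪Δ, p⟫ := by
  set μ := ‖e‖ ^ 2 / 2 with hμ_def
  have hevμ : ⟪e, v⟫ < μ := by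
    have := norm_sub_sq_real e v
    rw [hv] at this
    nlinarith [norm_nonneg (e - v)]
  have hμ : 0 < μ := by
    have := neg_le_of_abs_le ((abs_real_inner_le_norm e v).trans_eq (by rw [hv, mul_one]))
    nlinarith [norm_nonneg e]
  set c := (max ⟪e, v⟫ 0 + μ) / 2 with hc_def
  have hc : 0 ≤ c := by positivity
  have hcμ : c < μ := by have := max_lt hevμ hμ; linarith
  refine ⟨e - c • v, ?_, μ - c, by linarith, fun p hp hep => ?_⟩
  · rw [inner_sub_left, real_inner_smul_left, real_inner_self_eq_norm_sq, hv]
    linarith [le_max_left ⟪e, v⟫ 0]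
  · have hμp : μ ≤ ⟪e, p⟫ := by
      have := norm_sub_sq_real e p
      rw [hp] at this
      nlinarith [norm_nonneg (e - p)]
    have hvp : ⟪v, p⟫ ≤ 1 := (real_inner_le_norm v p).trans_eq (by rw [hv, hp, mul_one])
    rw [inner_sub_left, real_inner_smul_left]
    nlinarith [mul_le_mul_of_nonneg_left hvp hc]

lemma IsCompact.exists_subset_closedBall_add_smul {K : Set E} (hK : IsCompact K) {z Δ : E}
    {r β : ℝ} (hβ : 0 < β) (hKz : K ⊆ closedBall z r)
    (hsphere : ∀ x ∈ K, dist x z = r → β ≤ ⟪Δ, x - z⟫) :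
    ∃ t : ℝ, 0 < t ∧ K ⊆ closedBall (z + t • Δ) r := by
  set A := K ∩ {x | ⟪Δ, x - z⟫ ≤ β / 2}
  have hA : IsCompact A := hK.inter_right (isClosed_le (by fun_prop) continuous_const)
  obtain ⟨δ, hδ, hAδ⟩ : ∃ δ > 0, ∀ x ∈ A, δ ≤ r - dist x z := by
    refine hA.exists_forall_le' (by fun_prop) fun x ⟨hxK, hxA⟩ => sub_pos.2 ?_
    refine (mem_closedBall.1 (hKz hxK)).lt_of_ne fun hxz => ?_
    linarith [hsphere x hxK hxz, show ⟪Δ, x - z⟫ ≤ β / 2 from hxA]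
  set t := min (δ / (‖Δ‖ + 1)) (β / (‖Δ‖ ^ 2 + 1))
  have ht : 0 < t := by positivity
  refine ⟨t, ht, fun x hx => mem_closedBall.2 ?_⟩
  have hxz := mem_closedBall.1 (hKz hx)
  by_cases hnear : ⟪Δ, x - z⟫ ≤ β / 2
  · have htΔ : ‖t • Δ‖ ≤ δ := by
      rw [norm_smul, Real.norm_of_nonneg ht.le]
      calc t * ‖Δ‖ ≤ δ / (‖Δ‖ + 1) * (‖Δ‖ + 1) := by
            gcongr
            · exact min_le_left _ _
            · linarith
        _ = δ := div_mul_cancel₀ _ (by positivity)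
    calc dist x (z + t • Δ) ≤ dist x z + ‖t • Δ‖ := by
          rw [dist_eq_norm, dist_eq_norm, sub_add_eq_sub_sub]
          exact norm_sub_le _ _
      _ ≤ r := by linarith [hAδ x ⟨hx, hnear⟩]
  · have htΔ : t * ‖Δ‖ ^ 2 ≤ β := by
      calc t * ‖Δ‖ ^ 2 ≤ β / (‖Δ‖ ^ 2 + 1) * (‖Δ‖ ^ 2 + 1) := by
            gcongr
            · exact min_le_right _ _
            · linarith
        _ = β := div_mul_cancel₀ _ (by positivity)
    have hsq : dist x (z + t • Δ) ^ 2 ≤ r ^ 2 := by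
      have h := norm_sub_sq_real (x - z) (t • Δ)
      rw [norm_smul, Real.norm_of_nonneg ht.le, real_inner_smul_right, real_inner_comm] at h
      rw [dist_eq_norm, sub_add_eq_sub_sub, h, ← dist_eq_norm]
      nlinarith [dist_nonneg (x := x) (y := z)]
    exact (pow_le_pow_iff_left₀ dist_nonneg (dist_nonneg.trans hxz) two_ne_zero).1 hsq

variable {K : Set E}

lemma add_mem_of_isMinOn_inner (hK : IsCompact K) (hKc : K = ⋂ x ∈ K, closedBall x 1)
    {z v : E} (hv : ‖v‖ = 1) (hz : z ∈ K) (hmin : IsMinOn (⟪·, v⟫) K z) : z + v ∈ K := by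
  have hball : ∀ q, q ∈ K ↔ K ⊆ closedBall q 1 := fun q =>
    (Set.ext_iff.1 hKc q).trans mem_iInter_closedBall_iff
  by_contra hzv
  obtain ⟨w, hw, hfar⟩ : ∃ w ∈ K, 1 < dist w (z + v) := by
    simpa [subset_def, not_le] using mt (hball _).2 hzv
  obtain ⟨Δ, hΔv, β, hβ, hΔ⟩ := exists_inner_neg_and_le_inner_of_norm_eq_one (e := w - z) hv
    (by rwa [dist_eq_norm, ← sub_sub] at hfar)
  obtain ⟨t, ht, hKt⟩ := hK.exists_subset_closedBall_add_smul hβ ((hball z).1 hz)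
    fun x hx hxz => hΔ (x - z) (by rwa [← dist_eq_norm])
      (by rw [sub_sub_sub_cancel_right, ← dist_eq_norm]; exact (hball x).1 hx hw)
  have hlt : ⟪z + t • Δ, v⟫ < ⟪z, v⟫ := by
    rw [inner_add_left, real_inner_smul_left]
    nlinarith
  exact hlt.not_ge (hmin ((hball _).2 hKt))

lemma mem_sub_self_of_norm_eq_one (hK : IsCompact K) (hne : K.Nonempty)
    (hKc : K = ⋂ x ∈ K, closedBall x 1) {v : E} (hv : ‖v‖ = 1) : v ∈ K - K := by
  obtain ⟨z, hz, hmin⟩ := hK.exists_isMinOn hne (f := (⟪·, v⟫)) (by fun_prop)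
  exact ⟨z + v, add_mem_of_isMinOn_inner hK hKc hv hz hmin, z, hz, add_sub_cancel_left z v⟩

lemma sSup_image_inner_add_sSup_image_inner_neg (hK : IsCompact K) (hne : K.Nonempty) (u : E) :
    sSup ((⟪·, u⟫) '' K) + sSup ((⟪·, -u⟫) '' K) = sSup ((⟪·, u⟫) '' (K - K)) := by
  rw [← csSup_add (hne.image _) (hK.image (by fun_prop)).bddAbove (hne.image _)
    (hK.image (by fun_prop)).bddAbove]
  congr 1
  ext a
  simp [Set.mem_add, sub_eq_add_neg, inner_add_left, inner_neg_left]

lemma sSup_image_inner_eq_norm {s : Set E} {u : E} (hs : s ⊆ closedBall 0 1)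
    (hu : ‖u‖⁻¹ • u ∈ s) : sSup ((⟪·, u⟫) '' s) = ‖u‖ := by
  refine IsGreatest.csSup_eq ⟨⟨_, hu, ?_⟩, ?_⟩
  · change ⟪‖u‖⁻¹ • u, u⟫ = ‖u‖
    rw [real_inner_smul_left, real_inner_self_eq_norm_sq, sq, mul_comm, mul_self_mul_inv]
  · rintro _ ⟨x, hx, rfl⟩
    have := mem_closedBall_zero_iff.1 (hs hx)
    calc ⟪x, u⟫ ≤ ‖x‖ * ‖u‖ := real_inner_le_norm x u
      _ ≤ ‖u‖ := mul_le_of_le_one_left (norm_nonneg u) this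

theorem stmt_10_general (n : ℕ) (K : Set (EuclideanSpace ℝ (Fin n)))
    (hne : K.Nonempty) (hcomp : IsCompact K)
    (hball : K = ⋂ x ∈ K, Metric.closedBall x 1) :
    ∀ u : EuclideanSpace ℝ (Fin n),
      sSup ((fun y => (inner ℝ y u : ℝ)) '' K) +
        sSup ((fun y => (inner ℝ y (-u) : ℝ)) '' (⋂ x ∈ K, Metric.closedBall x 1)) = ‖u‖ := by
  intro u
  rw [← hball, sSup_image_inner_add_sSup_image_inner_neg hcomp hne]
  refine sSup_image_inner_eq_norm (sub_self_subset_closedBall_zero_one hball) ?_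
  rcases eq_or_ne u 0 with rfl | hu
  · obtain ⟨x, hx⟩ := hne
    simpa using Set.sub_mem_sub hx hx
  · exact mem_sub_self_of_norm_eq_one hcomp hne hball (norm_smul_inv_norm hu)

theorem stmt_10 (n : ℕ) (K : Set (EuclideanSpace ℝ (Fin n)))
    (hne : K.Nonempty) (hcomp : IsCompact K) (hconv : Convex ℝ K)
    (hball : K = ⋂ x ∈ K, Metric.closedBall x 1) :
    ∀ u : EuclideanSpace ℝ (Fin n),
      sSup ((fun y => (inner ℝ y u : ℝ)) '' K) +
        sSup ((fun y => (inner ℝ y (-u) : ℝ)) '' (⋂ x ∈ K, Metric.closedBall x 1)) = ‖u‖ :=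
  stmt_10_general n K hne hcomp hball
end
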